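/- A digraph D has a point-basis if and only if the shadow of every vertex of D contains an initial strong component; moreover, in that case every point-reaching set of D contains a point-basis. -/

import Mathlib

/-- Reachability by a directed walk (allowing the trivial walk). -/
def Reach {V : Type*} (A : V → V → Prop) : V → V → Prop := Relation.ReflTransGen A
/-- The strong component of a vertex: all vertices mutually reachable with it. -/
def SCC {V : Type*} (A : V → V → Prop) (v : V) : Set V :=
  {w | Reach A v w ∧ Reach A w v}

/-- A set is a strong component iff it is the strong component of some vertex. -/
def IsSCC {V : Type*} (A : V → V → Prop) (C : Set V) : Prop := ∃ v, C = SCC A v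

/-- A strong component is initial if no arc enters it from outside. -/
def InitialSCC {V : Type*} (A : V → V → Prop) (C : Set V) : Prop :=
  IsSCC A C ∧ ∀ x y, A x y → y ∈ C → x ∈ C
/-- A set S is point-reaching if every vertex is reachable from some vertex of S. -/
def PointReaching {V : Type*} (A : V → V → Prop) (S : Set V) : Prop :=
  ∀ v : V, ∃ s ∈ S, Reach A s v
/-- The shadow of u: all vertices from which u is reachable. -/
def Shadow {V : Type*} (A : V → V → Prop) (u : V) : Set V := {z | Reach A z u}
/-- A point-basis is a minimal point-reaching set. -/
def IsPointBasis {V : Type*} (A : V → V → Prop) (B : Set V) : Prop :=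
  PointReaching A B ∧ ∀ B' ⊂ B, ¬ PointReaching A B'

/-!
If a vertex `b` of a point-basis had an arc entering its strong component from a vertex `x`
outside it, then `b` would be reached from the vertex of the basis that reaches `x`, so `b` could
be dropped; hence the basis vertex reaching `u` spans an initial component inside the shadow of `u`.
Conversely, every point-reaching set `S` meets every initial component. Choosing one vertex of `S`
in each gives a set that is point-reaching by the shadow condition and minimal, because each chosen
vertex is the only one in its component while every point-reaching set must meet that component.
-/

section

variable {V : Type*} {A : V → V → Prop}

lemma mem_SCC_self (v : V) : v ∈ SCC A v :=
  ⟨.refl, .refl⟩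

lemma IsSCC.eq_of_mem {C C' : Set V} (hC : IsSCC A C) (hC' : IsSCC A C') {x : V}
    (hx : x ∈ C) (hx' : x ∈ C') : C = C' := by
  suffices key : ∀ {v x : V}, x ∈ SCC A v → SCC A v = SCC A x by
    obtain ⟨v, rfl⟩ := hC
    obtain ⟨v', rfl⟩ := hC'
    exact (key hx).trans (key hx').symm
  rintro v x ⟨hvx, hxv⟩
  ext w
  exact ⟨fun ⟨hvw, hwv⟩ => ⟨hxv.trans hvw, hwv.trans hvx⟩,
    fun ⟨hxw, hwx⟩ => ⟨hvx.trans hxw, hwx.trans hxv⟩⟩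

lemma InitialSCC.mem_of_reach {C : Set V} (hC : InitialSCC A C) {x y : V}
    (hxy : Reach A x y) (hy : y ∈ C) : x ∈ C := by
  induction hxy using Relation.ReflTransGen.head_induction_on with
  | refl => exact hy
  | head hxz _ ih => exact hC.2 _ _ hxz ih

lemma PointReaching.inter_initialSCC_nonempty {S C : Set V} (hS : PointReaching A S)
    (hC : InitialSCC A C) : (S ∩ C).Nonempty := by
  obtain ⟨v, rfl⟩ := hC.1
  obtain ⟨s, hsS, hsv⟩ := hS v
  exact ⟨s, hsS, hC.mem_of_reach hsv (mem_SCC_self v)⟩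

lemma PointReaching.diff_singleton {S : Set V} (hS : PointReaching A S) {b s : V}
    (hs : s ∈ S) (hsb : s ≠ b) (hsr : Reach A s b) : PointReaching A (S \ {b}) := by
  intro v
  obtain ⟨t, htS, htv⟩ := hS v
  by_cases htb : t = b
  · subst htb
    exact ⟨s, ⟨hs, hsb⟩, hsr.trans htv⟩
  · exact ⟨t, ⟨htS, htb⟩, htv⟩

lemma IsPointBasis.initialSCC_of_mem {B : Set V} (hB : IsPointBasis A B) {b : V}
    (hb : b ∈ B) : InitialSCC A (SCC A b) := by
  refine ⟨⟨b, rfl⟩, fun x y hxy hy => ?_⟩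
  by_contra hx
  have hxb : Reach A x b := Relation.ReflTransGen.head hxy hy.2
  obtain ⟨s, hsB, hsx⟩ := hB.1 x
  have hsb : s ≠ b := by
    rintro rfl
    exact hx ⟨hsx, hxb⟩
  exact hB.2 _ (Set.sdiff_singleton_ssubset.mpr hb) (hB.1.diff_singleton hsB hsb (hsx.trans hxb))

lemma IsPointBasis.exists_initialSCC_subset_shadow {B : Set V} (hB : IsPointBasis A B) (u : V) :
    ∃ C, InitialSCC A C ∧ C ⊆ Shadow A u := by
  obtain ⟨b, hbB, hbu⟩ := hB.1 u
  exact ⟨SCC A b, hB.initialSCC_of_mem hbB, fun w hw => hw.2.trans hbu⟩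

lemma isPointBasis_of_inter_initialSCC_eq_singleton {B : Set V} (hB : PointReaching A B)
    (hsep : ∀ b ∈ B, ∃ C, InitialSCC A C ∧ B ∩ C = {b}) : IsPointBasis A B := by
  refine ⟨hB, fun B' hB'B hB' => ?_⟩
  obtain ⟨b, hbB, hbB'⟩ := Set.exists_of_ssubset hB'B
  obtain ⟨C, hC, hBC⟩ := hsep b hbB
  obtain ⟨b', hb'B', hb'C⟩ := hB'.inter_initialSCC_nonempty hC
  have hb' : b' = b := by
    rw [← Set.mem_singleton_iff, ← hBC]
    exact ⟨hB'B.1 hb'B', hb'C⟩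
  exact hbB' (hb' ▸ hb'B')

lemma PointReaching.exists_isPointBasis_subset
    (H : ∀ u : V, ∃ C, InitialSCC A C ∧ C ⊆ Shadow A u) {S : Set V} (hS : PointReaching A S) :
    ∃ B ⊆ S, IsPointBasis A B := by
  choose f hfS hfC using fun C : {C : Set V // InitialSCC A C} =>
    hS.inter_initialSCC_nonempty C.2
  refine ⟨Set.range f, Set.range_subset_iff.mpr hfS,
    isPointBasis_of_inter_initialSCC_eq_singleton (fun u => ?_) ?_⟩
  · obtain ⟨C, hC, hCu⟩ := H u
    exact ⟨f ⟨C, hC⟩, Set.mem_range_self _, hCu (hfC ⟨C, hC⟩)⟩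
  · rintro _ ⟨C, rfl⟩
    refine ⟨C, C.2, Set.eq_singleton_iff_unique_mem.mpr ⟨⟨Set.mem_range_self C, hfC C⟩, ?_⟩⟩
    rintro _ ⟨⟨C', rfl⟩, hC'⟩
    obtain rfl : C' = C := Subtype.ext (C'.2.1.eq_of_mem C.2.1 (hfC C') hC')
    rfl

end

theorem pointBasis_exists_iff_shadows_contain_initial {V : Type*}
    (A : V → V → Prop) :
    ((∃ B : Set V, IsPointBasis A B) ↔
      ∀ u : V, ∃ C : Set V, InitialSCC A C ∧ C ⊆ Shadow A u) ∧
    ((∃ B : Set V, IsPointBasis A B) →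
      ∀ S : Set V, PointReaching A S → ∃ B ⊆ S, IsPointBasis A B) := by
  have shadows : (∃ B, IsPointBasis A B) → ∀ u : V, ∃ C, InitialSCC A C ∧ C ⊆ Shadow A u :=
    fun ⟨_, hB⟩ => hB.exists_initialSCC_subset_shadow
  have univ_reaching : PointReaching A (Set.univ : Set V) :=
    fun v => ⟨v, Set.mem_univ v, .refl⟩
  refine ⟨⟨shadows, fun H => ?_⟩, fun hex S hS => hS.exists_isPointBasis_subset (shadows hex)⟩
  obtain ⟨B, -, hB⟩ := univ_reaching.exists_isPointBasis_subset H
  exact ⟨B, hB⟩
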